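/- Let (X, d_X, f_X) be an injective augmented metric space and M its zeroth component module. If M is interval decomposable, say M ≅ ⊕_{k ∈ K} I^{J_k} for a finite multiset {{J_k : k ∈ K}} of intervals of ℝ², then this multiset equals the elder-rule staircode {{I_x : x ∈ X}}; in particular |K| = |X|. -/

import Mathlib

open CategoryTheory
open scoped Classical

universe u

/-- We regard the poset `ℝ²` (with the product order) as a category. -/
instance : CategoryTheory.Category (ℝ × ℝ) := Preorder.smallCategory _

section conn

variable {X : Type u} [MetricSpace X]

/-- One step of an `ε`-chain inside `S`. -/
def chainRel (S : Set X) (ε : ℝ) (a b : X) : Prop :=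
  a ∈ S ∧ b ∈ S ∧ dist a b ≤ ε

/-- `x` and `y` are `ε`-connected in `S`: there is a finite chain from `x` to `y` inside `S`
whose consecutive points are at distance at most `ε`. -/
def epsConn (S : Set X) (ε : ℝ) (x y : X) : Prop :=
  x ∈ S ∧ y ∈ S ∧ Relation.ReflTransGen (chainRel S ε) x y

/-- The sublevel set `X_σ` of `f`. -/
def sublevel (f : X → ℝ) (σ : ℝ) : Set X := {x | f x ≤ σ}

lemma epsConn_refl {S : Set X} {ε : ℝ} {x : X} (hx : x ∈ S) : epsConn S ε x x :=
  ⟨hx, hx, Relation.ReflTransGen.refl⟩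

lemma epsConn_symm {S : Set X} {ε : ℝ} {x y : X} (h : epsConn S ε x y) :
    epsConn S ε y x := by
  obtain ⟨hx, hy, hc⟩ := h
  refine ⟨hy, hx, ?_⟩
  have hsym : Symmetric (chainRel S ε) := by
    rintro a b ⟨ha, hb, hd⟩
    exact ⟨hb, ha, by rwa [dist_comm]⟩
  clear hx hy
  induction hc with
  | refl => exact Relation.ReflTransGen.refl
  | tail _ hbc ih => exact Relation.ReflTransGen.head (hsym hbc) ih

lemma epsConn_trans {S : Set X} {ε : ℝ} {x y z : X}
    (h1 : epsConn S ε x y) (h2 : epsConn S ε y z) : epsConn S ε x z :=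
  ⟨h1.1, h2.2.1, h1.2.2.trans h2.2.2⟩

lemma epsConn_mono {f : X → ℝ} {σ σ' ε ε' : ℝ} (hσ : σ ≤ σ') (hε : ε ≤ ε') {x y : X}
    (h : epsConn (sublevel f σ) ε x y) : epsConn (sublevel f σ') ε' x y := by
  obtain ⟨hx, hy, hc⟩ := h
  refine ⟨le_trans hx hσ, le_trans hy hσ, ?_⟩
  clear hx hy
  have key : ∀ a b, chainRel (sublevel f σ) ε a b → chainRel (sublevel f σ') ε' a b := by
    rintro a b ⟨ha, hb, hd⟩
    exact ⟨le_trans ha hσ, le_trans hb hσ, le_trans hd hε⟩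
  induction hc with
  | refl => exact Relation.ReflTransGen.refl
  | tail _ hbc ih => exact Relation.ReflTransGen.tail ih (key _ _ hbc)

/-- The `ε`-connectedness class of `x` in the sublevel set `X_σ`. -/
def connClass (f : X → ℝ) (σ ε : ℝ) (x : X) : Set X :=
  {y | epsConn (sublevel f σ) ε x y}

/-- The set of `ε`-connectedness classes of the sublevel set `X_σ` (empty when `ε < 0`). -/
def classes (f : X → ℝ) (σ ε : ℝ) : Set (Set X) :=
  {C | 0 ≤ ε ∧ ∃ x, f x ≤ σ ∧ C = connClass f σ ε x}

lemma connClass_eq {f : X → ℝ} {σ ε : ℝ} {x y : X}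
    (h : epsConn (sublevel f σ) ε x y) : connClass f σ ε x = connClass f σ ε y := by
  ext z
  exact ⟨fun hz => epsConn_trans (epsConn_symm h) hz, fun hz => epsConn_trans h hz⟩

end conn

section staircase

variable {X : Type u} [MetricSpace X] [LinearOrder X]

/-- The elder-rule staircase `I_x` of a point `x` of an augmented metric space:
all `(σ, ε)` with `ε ≥ 0` such that `x ∈ X_σ` and `x` is the least element of its
`ε`-connectedness class in `X_σ`. -/
def staircase (f : X → ℝ) (x : X) : Set (ℝ × ℝ) :=
  {p | 0 ≤ p.2 ∧ f x ≤ p.1 ∧ ∀ y, epsConn (sublevel f p.1) p.2 x y → x ≤ y}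

lemma staircase_convex (f : X → ℝ) :
    ∀ x : X, ∀ a ∈ staircase f x, ∀ b ∈ staircase f x, ∀ c, a ≤ c → c ≤ b →
      c ∈ staircase f x := by
  rintro x a ⟨ha0, haf, _⟩ b ⟨_, _, hb⟩ c hac hcb
  exact ⟨le_trans ha0 hac.2, le_trans haf hac.1,
    fun y hy => hb y (epsConn_mono hcb.1 hcb.2 hy)⟩

end staircase

section module

variable {X : Type u} [MetricSpace X] (𝔽 : Type u) [Field 𝔽]

/-- The structure map between the sets of `ε`-connectedness classes, for grades `p ≤ q`. -/
noncomputable def classMap (f : X → ℝ) {p q : ℝ × ℝ} (h : p ≤ q)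
    (C : classes f p.1 p.2) : classes f q.1 q.2 :=
  ⟨connClass f q.1 q.2 C.2.2.choose,
    le_trans C.2.1 h.2, C.2.2.choose, le_trans C.2.2.choose_spec.1 h.1, rfl⟩

lemma classMap_id (f : X → ℝ) (p : ℝ × ℝ) :
    classMap f (le_refl p) = (id : classes f p.1 p.2 → classes f p.1 p.2) := by
  funext C
  apply Subtype.ext
  exact (C.2.2.choose_spec.2).symm

lemma classMap_comp (f : X → ℝ) {p q r : ℝ × ℝ} (hpq : p ≤ q) (hqr : q ≤ r) :
    classMap f (le_trans hpq hqr) = classMap f hqr ∘ classMap f hpq := by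
  funext C
  apply Subtype.ext
  set x := C.2.2.choose with hxdef
  set C' := classMap f hpq C with hC'def
  set x₁ := C'.2.2.choose with hx₁def
  have hx₁spec := C'.2.2.choose_spec
  have hCq : (C' : Set X) = connClass f q.1 q.2 x := rfl
  have hcc : connClass f q.1 q.2 x = connClass f q.1 q.2 x₁ := by
    rw [← hCq]; exact hx₁spec.2
  have hmem : epsConn (sublevel f q.1) q.2 x x₁ := by
    have h1 : x₁ ∈ connClass f q.1 q.2 x₁ := epsConn_refl hx₁spec.1
    rw [← hcc] at h1
    exact h1
  exact connClass_eq (epsConn_mono hqr.1 hqr.2 hmem)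

/-- The zeroth component module of an augmented metric space `(X, d_X, f)`, as a functor
`ℝ² ⥤ Vec_𝔽`: at grade `(σ, ε)` it is the free `𝔽`-vector space on the set of
`ε`-connectedness classes of `X_σ` (the zero space when `ε < 0`), with structure maps
sending each class to the class containing it.  It is isomorphic to the zeroth persistent
homology of the Rips bifiltration of `(X, d_X, f)`. -/
noncomputable def zerothModule (f : X → ℝ) : (ℝ × ℝ) ⥤ ModuleCat.{u} 𝔽 where
  obj p := ModuleCat.of 𝔽 ((classes f p.1 p.2) →₀ 𝔽)
  map {p q} h := ModuleCat.ofHom (Finsupp.lmapDomain 𝔽 𝔽 (classMap f h.le))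
  map_id p := by
    apply ModuleCat.hom_ext
    show Finsupp.lmapDomain 𝔽 𝔽 (classMap f (le_refl p)) = _
    rw [classMap_id, Finsupp.lmapDomain_id]
    rfl
  map_comp {p q r} hpq hqr := by
    apply ModuleCat.hom_ext
    show Finsupp.lmapDomain 𝔽 𝔽 (classMap f (le_trans hpq.le hqr.le)) = _
    rw [classMap_comp f hpq.le hqr.le, Finsupp.lmapDomain_comp]
    rfl

/-- The direct sum `⊕ᵢ I^{J i}` of the interval modules supported on the (convex) subsets
`J i` of a poset `P`, as a functor `P ⥤ Vec_𝔽`.  At `p` its value is (canonically isomorphic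
to) the direct sum of one copy of `𝔽` for every `i` with `p ∈ J i`, and the structure maps
are identities on the summands supported at both endpoints, and zero otherwise. -/
noncomputable def sumIntervalModule {P : Type} [Preorder P]
    {ι : Type u} (J : ι → Set P)
    (hJ : ∀ i, ∀ a ∈ J i, ∀ b ∈ J i, ∀ c, a ≤ c → c ≤ b → c ∈ J i) :
    P ⥤ ModuleCat.{u} 𝔽 where
  obj p := ModuleCat.of 𝔽 (∀ i : ι, PLift (p ∈ J i) → 𝔽)
  map {p q} h := ModuleCat.ofHom
    { toFun := fun g i _ => if hp : p ∈ J i then g i ⟨hp⟩ else 0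
      map_add' := by
        intro g₁ g₂
        funext i hq
        show (if hp : p ∈ J i then (g₁ + g₂) i ⟨hp⟩ else 0)
            = (if hp : p ∈ J i then g₁ i ⟨hp⟩ else 0) + (if hp : p ∈ J i then g₂ i ⟨hp⟩ else 0)
        by_cases hp : p ∈ J i
        · simp only [dif_pos hp]; rfl
        · simp only [dif_neg hp]; rw [add_zero]
      map_smul' := by
        intro c g
        funext i hq
        show (if hp : p ∈ J i then (c • g) i ⟨hp⟩ else 0)
            = c • (if hp : p ∈ J i then g i ⟨hp⟩ else 0)
        by_cases hp : p ∈ J i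
        · simp only [dif_pos hp]; rfl
        · simp only [dif_neg hp]; rw [smul_zero] }
  map_id p := by
    refine ModuleCat.hom_ext (LinearMap.ext fun g => ?_)
    funext i hq
    show (if hp : p ∈ J i then g i ⟨hp⟩ else 0) = g i hq
    rw [dif_pos hq.down]
  map_comp {p q r} hpq hqr := by
    refine ModuleCat.hom_ext (LinearMap.ext fun g => ?_)
    funext i hr
    show (if hp : p ∈ J i then g i ⟨hp⟩ else 0)
        = (if hq : q ∈ J i then (if hp : p ∈ J i then g i ⟨hp⟩ else 0) else 0)
    by_cases hp : p ∈ J i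
    · have hq : q ∈ J i := hJ i p hp r hr.down q hpq.le hqr.le
      simp only [dif_pos hp, dif_pos hq]
    · by_cases hq : q ∈ J i
      · simp only [dif_neg hp, dif_pos hq]
      · simp only [dif_neg hp, dif_neg hq]

end module

/-- An interval of a poset `P`: a nonempty subset which is convex and connected by
finite zig-zags of comparable elements. -/
def IsPosetInterval {P : Type*} [Preorder P] (J : Set P) : Prop :=
  J.Nonempty ∧
  (∀ a ∈ J, ∀ b ∈ J, ∀ c, a ≤ c → c ≤ b → c ∈ J) ∧
  (∀ a ∈ J, ∀ b ∈ J,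
    Relation.ReflTransGen (fun p q => (p ∈ J ∧ q ∈ J) ∧ (p ≤ q ∨ q ≤ p)) a b)


section rankaux

open Module Finset

lemma finrank_range_lmapDomain {𝔽 : Type u} [Field 𝔽] {α β : Type u} [Fintype β]
    (g : α → β) :
    Module.finrank 𝔽 (LinearMap.range (Finsupp.lmapDomain 𝔽 𝔽 g)) =
      Fintype.card (Set.range g) := by
  classical
  have hcomp : g = (Subtype.val : Set.range g → β) ∘ Set.rangeFactorization g := rfl
  have hsec : (Subtype.val : Set.range g → β)
      = g ∘ (fun D : Set.range g => D.2.choose) := by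
    funext D
    exact (D.2.choose_spec).symm
  have hrange : LinearMap.range (Finsupp.lmapDomain 𝔽 𝔽 g)
      = LinearMap.range (Finsupp.lmapDomain 𝔽 𝔽 (Subtype.val : Set.range g → β)) := by
    apply le_antisymm
    · rintro y ⟨w, rfl⟩
      refine ⟨Finsupp.lmapDomain 𝔽 𝔽 (Set.rangeFactorization g) w, ?_⟩
      rw [← LinearMap.comp_apply, ← Finsupp.lmapDomain_comp]
      rfl
    · rintro y ⟨w, rfl⟩
      refine ⟨Finsupp.lmapDomain 𝔽 𝔽 (fun D : Set.range g => D.2.choose) w, ?_⟩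
      rw [← LinearMap.comp_apply, ← Finsupp.lmapDomain_comp, ← hsec]
  rw [hrange]
  have hinj : Function.Injective
      (Finsupp.lmapDomain 𝔽 𝔽 (Subtype.val : Set.range g → β)) := by
    intro a b hab
    exact Finsupp.mapDomain_injective Subtype.val_injective hab
  exact (LinearEquiv.finrank_eq (LinearEquiv.ofInjective _ hinj).symm).trans
    (((Finsupp.linearEquivFunOnFinite 𝔽 𝔽 (Set.range g)).finrank_eq).trans
      (Module.finrank_fintype_fun_eq_card 𝔽))

lemma finrank_range_sum {𝔽 : Type u} [Field 𝔽] {K : Type u} [Fintype K]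
    (J : K → Set (ℝ × ℝ))
    (hJc : ∀ k, ∀ a ∈ J k, ∀ b ∈ J k, ∀ c, a ≤ c → c ≤ b → c ∈ J k)
    {p q : ℝ × ℝ} (hpq : p ≤ q) :
    Module.finrank 𝔽
      (LinearMap.range ((sumIntervalModule 𝔽 J hJc).map (homOfLE hpq)).hom) =
      Fintype.card {k : K // p ∈ J k ∧ q ∈ J k} := by
  classical
  set φ : ({k : K // p ∈ J k ∧ q ∈ J k} → 𝔽) →ₗ[𝔽] ((k : K) → PLift (q ∈ J k) → 𝔽) :=
    { toFun := fun h k _ => if hk : p ∈ J k ∧ q ∈ J k then h ⟨k, hk⟩ else 0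
      map_add' := by
        intro a b
        funext k hq
        by_cases hk : p ∈ J k ∧ q ∈ J k
        · simp only [Pi.add_apply, dif_pos hk]
        · simp only [Pi.add_apply, dif_neg hk, add_zero]
      map_smul' := by
        intro c a
        funext k hq
        by_cases hk : p ∈ J k ∧ q ∈ J k
        · simp only [Pi.smul_apply, RingHom.id_apply, dif_pos hk]
        · simp only [Pi.smul_apply, RingHom.id_apply, dif_neg hk, smul_zero] } with hφ
  have hinjφ : Function.Injective φ := by
    intro a b hab
    funext kk
    have h1 := congrFun (congrFun hab kk.1) ⟨kk.2.2⟩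
    simpa [hφ, dif_pos kk.2] using h1
  have hrange : LinearMap.range ((sumIntervalModule 𝔽 J hJc).map (homOfLE hpq)).hom
      = LinearMap.range φ := by
    apply le_antisymm
    · rintro y ⟨g, rfl⟩
      refine ⟨fun kk => g kk.1 ⟨kk.2.1⟩, ?_⟩
      funext k hq
      show (if hk : p ∈ J k ∧ q ∈ J k then g k ⟨hk.1⟩ else 0)
        = (if hp : p ∈ J k then g k ⟨hp⟩ else 0)
      by_cases hp : p ∈ J k
      · rw [dif_pos hp, dif_pos ⟨hp, hq.down⟩]
      · rw [dif_neg hp, dif_neg (fun hk => hp hk.1)]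
    · rintro y ⟨h, rfl⟩
      refine ⟨fun k hp => if hq : q ∈ J k then h ⟨k, ⟨hp.down, hq⟩⟩ else 0, ?_⟩
      funext k hq
      show (if hp : p ∈ J k then (if hq' : q ∈ J k then h ⟨k, ⟨hp, hq'⟩⟩ else 0) else 0)
        = (if hk : p ∈ J k ∧ q ∈ J k then h ⟨k, hk⟩ else 0)
      by_cases hp : p ∈ J k
      · rw [dif_pos hp, dif_pos hq.down, dif_pos ⟨hp, hq.down⟩]
      · rw [dif_neg hp, dif_neg (fun hk => hp hk.1)]
  rw [hrange]
  exact (LinearEquiv.finrank_eq (LinearEquiv.ofInjective _ hinjφ).symm).trans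
    (Module.finrank_fintype_fun_eq_card 𝔽)

lemma finrank_range_map_eq_of_iso {𝔽 : Type u} [Field 𝔽]
    {F G : (ℝ × ℝ) ⥤ ModuleCat.{u} 𝔽} (e : F ≅ G) {p q : ℝ × ℝ} (h : p ⟶ q) :
    Module.finrank 𝔽 (LinearMap.range (F.map h).hom) =
      Module.finrank 𝔽 (LinearMap.range (G.map h).hom) := by
  have hnat : F.map h ≫ e.hom.app q = e.hom.app p ≫ G.map h := e.hom.naturality h
  have h1 : LinearMap.range (G.map h).hom
      = Submodule.map ((e.app q).toLinearEquiv : F.obj q →ₗ[𝔽] G.obj q)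
          (LinearMap.range (F.map h).hom) := by
    rw [← LinearMap.range_comp]
    have hco : ((e.app q).toLinearEquiv : F.obj q →ₗ[𝔽] G.obj q).comp (F.map h).hom
        = (G.map h).hom.comp (e.hom.app p).hom := congrArg ModuleCat.Hom.hom hnat
    rw [hco, LinearMap.range_comp]
    have hsurj : LinearMap.range (e.hom.app p).hom = ⊤ := by
      rw [LinearMap.range_eq_top]
      intro y
      exact ⟨(e.inv.app p).hom y, congrFun (congrArg (fun (m : G.obj p ⟶ G.obj p) => (m.hom : G.obj p → G.obj p)) (e.inv_hom_id_app p)) y⟩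
    rw [hsurj, Submodule.map_top, LinearMap.range_eq_map]
  rw [h1, LinearEquiv.finrank_map_eq]

section classcount

variable {X : Type u} [MetricSpace X] [Fintype X] [LinearOrder X]

lemma epsConn_zero {S : Set X} {x y : X} (h : epsConn S 0 x y) : x = y := by
  obtain ⟨-, -, hc⟩ := h
  induction hc with
  | refl => rfl
  | tail _ hstep ih =>
    rename_i b c _
    have : b = c := dist_le_zero.mp hstep.2.2
    exact ih.trans this

lemma staircase_zero (f : X → ℝ) {x : X} {σ : ℝ} (h : f x ≤ σ) :
    ((σ, 0) : ℝ × ℝ) ∈ staircase f x := by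
  refine ⟨le_rfl, h, ?_⟩
  intro y hy
  rw [← epsConn_zero hy]

noncomputable def setMin (C : Set X) (h : C.Nonempty) : X :=
  C.toFinset.min' (by rwa [← Set.toFinset_nonempty] at h)

lemma setMin_mem (C : Set X) (h : C.Nonempty) : setMin C h ∈ C :=
  Set.mem_toFinset.mp (Finset.min'_mem _ _)

lemma setMin_le (C : Set X) (h : C.Nonempty) {y : X} (hy : y ∈ C) : setMin C h ≤ y :=
  Finset.min'_le _ _ (Set.mem_toFinset.mpr hy)

lemma mem_connClass_self (f : X → ℝ) {σ : ℝ} (ε : ℝ) {x : X} (h : f x ≤ σ) :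
    x ∈ connClass f σ ε x :=
  epsConn_refl h

lemma classMap_val_eq (f : X → ℝ) {p q : ℝ × ℝ} (hpq : p ≤ q)
    (C : classes f p.1 p.2) {x : X} (hx : x ∈ (C : Set X)) :
    (classMap f hpq C : Set X) = connClass f q.1 q.2 x := by
  have hspec := C.2.2.choose_spec
  have hconn : epsConn (sublevel f p.1) p.2 C.2.2.choose x := by
    have : x ∈ connClass f p.1 p.2 C.2.2.choose := by rw [← hspec.2]; exact hx
    exact this
  exact connClass_eq (epsConn_mono hpq.1 hpq.2 hconn)

lemma card_range_classMap (f : X → ℝ) (hmono : ∀ x y : X, x ≤ y ↔ f x ≤ f y)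
    {p q : ℝ × ℝ} (hpq : p ≤ q) (hp2 : 0 ≤ p.2) :
    Fintype.card (Set.range (classMap f hpq)) =
      Fintype.card {x : X // p ∈ staircase f x ∧ q ∈ staircase f x} := by
  classical
  have hq2 : (0:ℝ) ≤ q.2 := le_trans hp2 hpq.2
  refine (Fintype.card_congr (Equiv.ofBijective ?_ ⟨?_, ?_⟩)).symm
  · -- the map
    exact fun x => ⟨classMap f hpq ⟨connClass f p.1 p.2 x.1, hp2, x.1, x.2.1.2.1, rfl⟩,
      ⟨_, rfl⟩⟩
  · -- injective
    rintro ⟨x, hxp, hxq⟩ ⟨y, hyp, hyq⟩ hxy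
    have hx' : (classMap f hpq ⟨connClass f p.1 p.2 x, hp2, x, hxp.2.1, rfl⟩ : Set X)
        = connClass f q.1 q.2 x :=
      classMap_val_eq f hpq _ (mem_connClass_self f p.2 hxp.2.1)
    have hy' : (classMap f hpq ⟨connClass f p.1 p.2 y, hp2, y, hyp.2.1, rfl⟩ : Set X)
        = connClass f q.1 q.2 y :=
      classMap_val_eq f hpq _ (mem_connClass_self f p.2 hyp.2.1)
    have hval : connClass f q.1 q.2 x = connClass f q.1 q.2 y := by
      rw [← hx', ← hy']
      exact congrArg (fun (D : Set.range (classMap f hpq)) => ((D : classes f q.1 q.2) : Set X)) hxy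
    have hyx : y ∈ connClass f q.1 q.2 x := by
      rw [hval]
      exact mem_connClass_self f q.2 hyq.2.1
    have h1 : x ≤ y := hxq.2.2 y hyx
    have hxy2 : x ∈ connClass f q.1 q.2 y := by
      rw [← hval]
      exact mem_connClass_self f q.2 hxq.2.1
    have h2 : y ≤ x := hyq.2.2 x hxy2
    exact Subtype.ext (le_antisymm h1 h2)
  · -- surjective
    rintro ⟨D, C, hC⟩
    set x₀ := C.2.2.choose with hx₀def
    have hspec := C.2.2.choose_spec
    have hx₀C : x₀ ∈ (C : Set X) := by
      rw [hspec.2]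
      exact mem_connClass_self f p.2 hspec.1
    have hDval : (D : Set X) = connClass f q.1 q.2 x₀ := by
      rw [← hC]
      exact classMap_val_eq f hpq C hx₀C
    have hx₀q : x₀ ∈ connClass f q.1 q.2 x₀ :=
      mem_connClass_self f q.2 (le_trans hspec.1 hpq.1)
    have hne : (connClass f q.1 q.2 x₀).Nonempty := ⟨x₀, hx₀q⟩
    set m := setMin _ hne with hm
    have hm_mem : m ∈ connClass f q.1 q.2 x₀ := setMin_mem _ hne
    have hmx₀ : m ≤ x₀ := setMin_le _ hne hx₀q
    have hfm_q : f m ≤ q.1 := hm_mem.2.1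
    have hfm_p : f m ≤ p.1 := le_trans ((hmono m x₀).mp hmx₀) hspec.1
    have hclassm : connClass f q.1 q.2 m = connClass f q.1 q.2 x₀ :=
      (connClass_eq hm_mem).symm
    have hq_stair : q ∈ staircase f m := by
      refine ⟨hq2, hfm_q, ?_⟩
      intro y hy
      refine setMin_le _ hne ?_
      rw [← hclassm]
      exact hy
    have hp_stair : p ∈ staircase f m := by
      refine ⟨hp2, hfm_p, ?_⟩
      intro y hy
      refine setMin_le _ hne ?_
      rw [← hclassm]
      exact epsConn_mono hpq.1 hpq.2 hy
    refine ⟨⟨m, hp_stair, hq_stair⟩, ?_⟩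
    apply Subtype.ext
    apply Subtype.ext
    show (classMap f hpq ⟨connClass f p.1 p.2 m, hp2, m, hfm_p, rfl⟩ : Set X) = (D : Set X)
    rw [classMap_val_eq f hpq _ (mem_connClass_self f p.2 hfm_p), hclassm, hDval]

set_option maxHeartbeats 2000000 in
lemma finrank_range_zeroth (𝔽 : Type u) [Field 𝔽] (f : X → ℝ)
    (hmono : ∀ x y : X, x ≤ y ↔ f x ≤ f y) {p q : ℝ × ℝ} (hpq : p ≤ q) :
    Module.finrank 𝔽 (LinearMap.range ((zerothModule 𝔽 f).map (homOfLE hpq)).hom) =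
      Fintype.card {x : X // p ∈ staircase f x ∧ q ∈ staircase f x} := by
  classical
  by_cases hp2 : (0:ℝ) ≤ p.2
  · have h1 := finrank_range_lmapDomain (𝔽 := 𝔽) (classMap f hpq)
    have h2 := card_range_classMap f hmono hpq hp2
    refine h1.trans (Eq.trans ?_ h2)
    congr 1
    exact Subsingleton.elim _ _
  · -- the source is the zero module
    have hzero : ∀ v : ((classes f p.1 p.2 : Set (Set X)) →₀ 𝔽), v = 0 := by
      intro v
      ext a
      exact absurd a.2.1 hp2
    have hbot : LinearMap.range ((zerothModule 𝔽 f).map (homOfLE hpq)).hom = ⊥ := by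
      apply le_antisymm
      · rintro y ⟨w, rfl⟩
        have : w = 0 := hzero w
        rw [this, map_zero]
        exact Submodule.zero_mem ⊥
      · exact bot_le
    rw [hbot, finrank_bot]
    symm
    rw [Fintype.card_eq_zero_iff]
    exact ⟨fun x => hp2 x.2.1.1⟩

end classcount

end rankaux

section combin

open Finset

lemma filter_eq_single_card {X : Type u} [Fintype X] (P : X → Prop) (x0 : X)
    (hP : ∀ x, P x → x = x0) :
    (univ.filter P).card = if P x0 then 1 else 0 := by
  by_cases h : P x0
  · rw [if_pos h]
    have : univ.filter P = {x0} := by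
      ext x
      simp only [mem_filter, mem_univ, true_and, mem_singleton]
      exact ⟨fun hx => hP x hx, fun hx => hx ▸ h⟩
    rw [this, card_singleton]
  · rw [if_neg h]
    rw [Finset.card_eq_zero]
    apply Finset.filter_eq_empty_iff.mpr
    intro x _ hx
    exact h ((hP x hx) ▸ hx)

lemma combinatorial_step {X K : Type u} [Fintype X] [Fintype K] [LinearOrder X]
    (fv : X → ℝ) (stair : X → Set (ℝ × ℝ)) (J : K → Set (ℝ × ℝ))
    (hfmono : ∀ x y : X, x ≤ y ↔ fv x ≤ fv y)
    (hS1 : ∀ x p, p ∈ stair x → 0 ≤ p.2 ∧ fv x ≤ p.1)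
    (hS2 : ∀ x σ, fv x ≤ σ → ((σ, 0) : ℝ × ℝ) ∈ stair x)
    (hSconv : ∀ x, ∀ a ∈ stair x, ∀ b ∈ stair x, ∀ c, a ≤ c → c ≤ b → c ∈ stair x)
    (hJne : ∀ k, (J k).Nonempty)
    (hJconv : ∀ k, ∀ a ∈ J k, ∀ b ∈ J k, ∀ c, a ≤ c → c ≤ b → c ∈ J k)
    (hE : ∀ p q : ℝ × ℝ, p ≤ q →
      (univ.filter fun k => p ∈ J k ∧ q ∈ J k).card =
      (univ.filter fun x => p ∈ stair x ∧ q ∈ stair x).card) :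
    ∃ e : K ≃ X, ∀ k, J k = stair (e k) := by
  -- pointwise count
  have hpt : ∀ p : ℝ × ℝ, (univ.filter fun k => p ∈ J k).card =
      (univ.filter fun x => p ∈ stair x).card := by
    intro p
    have := hE p p le_rfl
    simpa [and_self] using this
  -- F0 : points of J k have second coordinate ≥ 0
  have hF0 : ∀ k p, p ∈ J k → (0:ℝ) ≤ p.2 := by
    intro k p hp
    by_contra hneg
    have h1 : (univ.filter fun x => p ∈ stair x) = ∅ := by
      apply Finset.filter_eq_empty_iff.mpr
      intro x _ hx
      exact hneg (hS1 x p hx).1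
    have h2 : k ∈ (univ.filter fun k => p ∈ J k) := by simp [hp]
    have := hpt p
    rw [h1] at this
    simp at this
    exact this hp
  -- the subset-equal trick
  have hsub : ∀ (p q : ℝ × ℝ), p ≤ q →
      ((univ.filter fun k => p ∈ J k ∧ q ∈ J k).card
        = (univ.filter fun k => q ∈ J k).card) →
      ∀ k, q ∈ J k → p ∈ J k := by
    intro p q hpq hcard k hk
    have hss : (univ.filter fun k => p ∈ J k ∧ q ∈ J k) ⊆ (univ.filter fun k => q ∈ J k) := by
      intro k' hk'
      simp only [mem_filter, mem_univ, true_and] at hk' ⊢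
      exact hk'.2
    have := Finset.eq_of_subset_of_card_le hss (le_of_eq hcard.symm)
    have hk2 : k ∈ (univ.filter fun k => q ∈ J k) := by simp [hk]
    rw [← this] at hk2
    simp only [mem_filter, mem_univ, true_and] at hk2
    exact hk2.1
  -- F1 : (p.1, 0) ∈ J k whenever p ∈ J k
  have hF1 : ∀ k (p : ℝ × ℝ), p ∈ J k → ((p.1, 0) : ℝ × ℝ) ∈ J k := by
    intro k p hp
    have h2 : (0:ℝ) ≤ p.2 := hF0 k p hp
    have hle : ((p.1, 0) : ℝ × ℝ) ≤ p := ⟨le_rfl, h2⟩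
    refine hsub _ p hle ?_ k hp
    rw [hE _ p hle, hpt p]
    congr 1
    apply Finset.filter_congr
    intro x _
    constructor
    · rintro ⟨_, h⟩; exact h
    · intro h; exact ⟨hS2 x p.1 (hS1 x p h).2, h⟩
  -- F2 : the trace on the ε = 0 line is upward closed
  have hF2 : ∀ k (a b : ℝ), a ≤ b → ((a, 0) : ℝ × ℝ) ∈ J k → ((b, 0) : ℝ × ℝ) ∈ J k := by
    intro k a b hab ha
    have hle : ((a, 0) : ℝ × ℝ) ≤ ((b, 0) : ℝ × ℝ) := ⟨hab, le_rfl⟩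
    -- every J containing (a,0) contains (b,0): symmetric form of hsub
    have hcard : (univ.filter fun k => ((a,0) : ℝ×ℝ) ∈ J k ∧ ((b,0):ℝ×ℝ) ∈ J k).card
        = (univ.filter fun k => ((a,0):ℝ×ℝ) ∈ J k).card := by
      rw [hE _ _ hle, hpt]
      congr 1
      apply Finset.filter_congr
      intro x _
      constructor
      · rintro ⟨h, _⟩; exact h
      · intro h
        exact ⟨h, hS2 x b (le_trans (hS1 x _ h).2 hab)⟩
    have hss : (univ.filter fun k => ((a,0) : ℝ×ℝ) ∈ J k ∧ ((b,0):ℝ×ℝ) ∈ J k)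
        ⊆ (univ.filter fun k => ((a,0):ℝ×ℝ) ∈ J k) := by
      intro k' hk'
      simp only [mem_filter, mem_univ, true_and] at hk' ⊢
      exact hk'.1
    have heq := Finset.eq_of_subset_of_card_le hss (le_of_eq hcard.symm)
    have hk2 : k ∈ (univ.filter fun k => ((a,0):ℝ×ℝ) ∈ J k) := by simp [ha]
    rw [← heq] at hk2
    simp only [mem_filter, mem_univ, true_and] at hk2
    exact hk2.2
  -- key : for q ∈ J k there is x with corner in J k and fv x ≤ q.1
  have hkey : ∀ k (q : ℝ × ℝ), q ∈ J k → ∃ x, ((fv x, 0) : ℝ × ℝ) ∈ J k ∧ fv x ≤ q.1 := by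
    intro k q hq
    have h2 : (0:ℝ) ≤ q.2 := hF0 k q hq
    -- some x with q ∈ stair x
    have hne0 : (univ.filter fun x => q ∈ stair x).Nonempty := by
      rw [← Finset.card_pos, ← hpt q, Finset.card_pos]
      exact ⟨k, by simp [hq]⟩
    obtain ⟨x₁, hx₁⟩ := hne0
    simp only [mem_filter, mem_univ, true_and] at hx₁
    have hfx₁ : fv x₁ ≤ q.1 := (hS1 x₁ q hx₁).2
    set A : Finset X := univ.filter (fun x => fv x ≤ q.1) with hA
    have hAne : A.Nonempty := ⟨x₁, by simp [hA, hfx₁]⟩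
    set xm := A.max' hAne with hxm
    have hxmA : xm ∈ A := A.max'_mem hAne
    have hfxm : fv xm ≤ q.1 := by
      simpa [hA] using hxmA
    set p' : ℝ × ℝ := (fv xm, q.2) with hp'
    have hle : p' ≤ q := ⟨hfxm, le_rfl⟩
    have hcard : (univ.filter fun k => p' ∈ J k ∧ q ∈ J k).card
        = (univ.filter fun k => q ∈ J k).card := by
      rw [hE _ _ hle, hpt]
      congr 1
      apply Finset.filter_congr
      intro x _
      constructor
      · rintro ⟨_, h⟩; exact h
      · intro h
        refine ⟨?_, h⟩
        have hxA : x ∈ A := by simp [hA, (hS1 x q h).2]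
        have hxxm : x ≤ xm := A.le_max' x hxA
        have hcorner : ((fv x, 0) : ℝ × ℝ) ∈ stair x := hS2 x (fv x) le_rfl
        refine hSconv x _ hcorner _ h p' ⟨(hfmono x xm).mp hxxm, h2⟩ hle
    have hp'J : p' ∈ J k := hsub p' q hle hcard k hq
    exact ⟨xm, hF1 k p' hp'J, hfxm⟩
  -- the corner point of each J k
  have hSne : ∀ k, (univ.filter fun x => ((fv x, 0) : ℝ × ℝ) ∈ J k).Nonempty := by
    intro k
    obtain ⟨q, hq⟩ := hJne k
    obtain ⟨x, hx, _⟩ := hkey k q hq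
    exact ⟨x, by simp [hx]⟩
  set xof : K → X := fun k => (univ.filter fun x => ((fv x, 0) : ℝ × ℝ) ∈ J k).min' (hSne k)
    with hxof
  have hxof_mem : ∀ k, ((fv (xof k), 0) : ℝ × ℝ) ∈ J k := by
    intro k
    have := Finset.min'_mem _ (hSne k)
    simpa [hxof] using this
  have hxof_le : ∀ k x, ((fv x, 0) : ℝ × ℝ) ∈ J k → xof k ≤ x := by
    intro k x hx
    exact Finset.min'_le _ x (by simp [hx])
  have hanchor : ∀ k (q : ℝ × ℝ), q ∈ J k → fv (xof k) ≤ q.1 := by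
    intro k q hq
    obtain ⟨x, hx, hfx⟩ := hkey k q hq
    exact le_trans ((hfmono _ _).mp (hxof_le k x hx)) hfx
  have hdown : ∀ k (q p' : ℝ × ℝ), q ∈ J k → p' ≤ q → 0 ≤ p'.2 → fv (xof k) ≤ p'.1 →
      p' ∈ J k := by
    intro k q p' hq hle h2 hfx
    have hcorner : ((p'.1, 0) : ℝ × ℝ) ∈ J k := hF2 k _ _ hfx (hxof_mem k)
    exact hJconv k _ hcorner _ hq p' ⟨le_rfl, h2⟩ hle
  -- the counting identity G
  have hG : ∀ (q : ℝ × ℝ) (x' : X), 0 ≤ q.2 → fv x' ≤ q.1 →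
      (univ.filter fun k => q ∈ J k ∧ xof k ≤ x').card =
      (univ.filter fun x => q ∈ stair x ∧ x ≤ x').card := by
    intro q x' h2 h1
    set p' : ℝ × ℝ := (fv x', q.2) with hp'
    have hle : p' ≤ q := ⟨h1, le_rfl⟩
    have := hE p' q hle
    rw [Finset.filter_congr (p := fun k => p' ∈ J k ∧ q ∈ J k)
        (q := fun k => q ∈ J k ∧ xof k ≤ x') ?_ , Finset.filter_congr
        (p := fun x => p' ∈ stair x ∧ q ∈ stair x)
        (q := fun x => q ∈ stair x ∧ x ≤ x') ?_] at this
    · exact this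
    · intro x _
      constructor
      · rintro ⟨hpx, hqx⟩
        exact ⟨hqx, (hfmono x x').mpr (hS1 x p' hpx).2⟩
      · rintro ⟨hqx, hxx⟩
        refine ⟨hSconv x _ (hS2 x (fv x) le_rfl) _ hqx p'
          ⟨(hfmono x x').mp hxx, h2⟩ hle, hqx⟩
    · intro k _
      constructor
      · rintro ⟨hpk, hqk⟩
        exact ⟨hqk, hxof_le k x' (hF1 k p' hpk)⟩
      · rintro ⟨hqk, hxk⟩
        exact ⟨hdown k q p' hqk hle h2 ((hfmono _ _).mp hxk), hqk⟩
  -- the key pointwise identity D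
  have hD : ∀ (q : ℝ × ℝ) (x0 : X),
      (univ.filter fun k => q ∈ J k ∧ xof k = x0).card = if q ∈ stair x0 then 1 else 0 := by
    intro q x0
    by_cases h2 : (0:ℝ) ≤ q.2
    · by_cases h1 : fv x0 ≤ q.1
      · -- main case
        have hA0 := hG q x0 h2 h1
        have hfinal : (univ.filter fun x => q ∈ stair x ∧ x = x0).card
            = if q ∈ stair x0 then 1 else 0 := by
          by_cases hq : q ∈ stair x0
          · rw [if_pos hq, Finset.card_eq_one]
            refine ⟨x0, ?_⟩
            ext x
            simp only [mem_filter, mem_univ, true_and, mem_singleton]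
            exact ⟨fun h => h.2, fun h => ⟨h ▸ hq, h⟩⟩
          · rw [if_neg hq, Finset.card_eq_zero]
            apply Finset.filter_eq_empty_iff.mpr
            rintro x - ⟨hxs, rfl⟩
            exact hq hxs
        set B : Finset X := univ.filter (fun x => x < x0) with hB
        have hsplitJ : ∀ (t : Finset K), True := fun _ => trivial
        by_cases hBne : B.Nonempty
        · set x1 := B.max' hBne with hx1
          have hx1lt : x1 < x0 := (Finset.mem_filter.mp (B.max'_mem hBne)).2
          have hlt_iff : ∀ y : X, y < x0 ↔ y ≤ x1 := by
            intro y
            constructor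
            · intro hy
              exact B.le_max' y (by simp [hB, hy])
            · intro hy
              exact lt_of_le_of_lt hy hx1lt
          have hfx1 : fv x1 ≤ q.1 := le_trans ((hfmono _ _).mp hx1lt.le) h1
          have hA1 := hG q x1 h2 hfx1
          -- split J side
          have hJsplit : (univ.filter fun k => q ∈ J k ∧ xof k ≤ x0).card
              = (univ.filter fun k => q ∈ J k ∧ xof k = x0).card
                + (univ.filter fun k => q ∈ J k ∧ xof k ≤ x1).card := by
            rw [← Finset.card_union_of_disjoint]
            · congr 1
              ext k
              simp only [mem_union, mem_filter, mem_univ, true_and]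
              constructor
              · rintro ⟨hq, hle⟩
                rcases eq_or_lt_of_le hle with h | h
                · exact Or.inl ⟨hq, h⟩
                · exact Or.inr ⟨hq, (hlt_iff _).mp h⟩
              · rintro (⟨hq, h⟩ | ⟨hq, h⟩)
                · exact ⟨hq, le_of_eq h⟩
                · exact ⟨hq, le_of_lt ((hlt_iff _).mpr h)⟩
            · rw [Finset.disjoint_left]
              intro k hk1 hk2
              simp only [mem_filter, mem_univ, true_and] at hk1 hk2
              exact absurd (hk1.2 ▸ (hlt_iff (xof k)).mpr hk2.2) (lt_irrefl x0)
          have hSsplit : (univ.filter fun x => q ∈ stair x ∧ x ≤ x0).card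
              = (univ.filter fun x => q ∈ stair x ∧ x = x0).card
                + (univ.filter fun x => q ∈ stair x ∧ x ≤ x1).card := by
            rw [← Finset.card_union_of_disjoint]
            · congr 1
              ext x
              simp only [mem_union, mem_filter, mem_univ, true_and]
              constructor
              · rintro ⟨hq, hle⟩
                rcases eq_or_lt_of_le hle with h | h
                · exact Or.inl ⟨hq, h⟩
                · exact Or.inr ⟨hq, (hlt_iff _).mp h⟩
              · rintro (⟨hq, h⟩ | ⟨hq, h⟩)
                · exact ⟨hq, le_of_eq h⟩
                · exact ⟨hq, le_of_lt ((hlt_iff _).mpr h)⟩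
            · rw [Finset.disjoint_left]
              intro x hk1 hk2
              simp only [mem_filter, mem_univ, true_and] at hk1 hk2
              exact absurd (hk1.2 ▸ (hlt_iff x).mpr hk2.2) (lt_irrefl x0)
          omega
        · -- x0 is the minimum
          have hmin : ∀ y : X, y ≤ x0 ↔ y = x0 := by
            intro y
            constructor
            · intro hy
              rcases eq_or_lt_of_le hy with h | h
              · exact h
              · exact absurd ⟨y, by simp [hB, h]⟩ hBne
            · intro h; exact le_of_eq h
          have e1 : (univ.filter fun k => q ∈ J k ∧ xof k ≤ x0)
              = (univ.filter fun k => q ∈ J k ∧ xof k = x0) := by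
            apply Finset.filter_congr
            intro k _
            rw [hmin (xof k)]
          have e2 : (univ.filter fun x => q ∈ stair x ∧ x ≤ x0)
              = (univ.filter fun x => q ∈ stair x ∧ x = x0) := by
            apply Finset.filter_congr
            intro x _
            rw [hmin x]
          rw [e1, e2] at hA0
          rw [hA0]
          exact hfinal
      · -- fv x0 > q.1 : both sides are 0
        have hL : (univ.filter fun k => q ∈ J k ∧ xof k = x0) = ∅ := by
          apply Finset.filter_eq_empty_iff.mpr
          intro k _ hk
          exact h1 (hk.2 ▸ hanchor k q hk.1)
        rw [hL]
        rw [if_neg (fun h => h1 (hS1 x0 q h).2)]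
        simp
    · -- q.2 < 0 : both sides are 0
      have hL : (univ.filter fun k => q ∈ J k ∧ xof k = x0) = ∅ := by
        apply Finset.filter_eq_empty_iff.mpr
        intro k _ hk
        exact h2 (hF0 k q hk.1)
      rw [hL]
      rw [if_neg (fun h => h2 (hS1 x0 q h).1)]
      simp
  -- each fiber of xof has exactly one element
  have hfiber : ∀ x0 : X, (univ.filter fun k => xof k = x0).card = 1 := by
    intro x0
    have hq0 : ((fv x0, 0) : ℝ × ℝ) ∈ stair x0 := hS2 x0 (fv x0) le_rfl
    have := hD (fv x0, 0) x0
    rw [if_pos hq0] at this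
    rw [← this]
    congr 1
    apply Finset.filter_congr
    intro k _
    constructor
    · rintro h
      exact ⟨h ▸ hxof_mem k, h⟩
    · rintro ⟨_, h⟩
      exact h
  -- xof is a bijection
  have hbij : Function.Bijective xof := by
    constructor
    · intro k k' hkk
      have h1 : k ∈ univ.filter fun k'' => xof k'' = xof k := by simp
      have h2 : k' ∈ univ.filter fun k'' => xof k'' = xof k := by simp [hkk]
      have := Finset.card_le_one.mp (le_of_eq (hfiber (xof k))) k h1 k' h2
      exact this
    · intro x0
      have := hfiber x0
      have hne : (univ.filter fun k => xof k = x0).Nonempty := by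
        rw [← Finset.card_pos, this]; norm_num
      obtain ⟨k, hk⟩ := hne
      simp only [mem_filter, mem_univ, true_and] at hk
      exact ⟨k, hk⟩
  -- J k = stair (xof k)
  have hJeq : ∀ k, J k = stair (xof k) := by
    intro k
    ext q
    constructor
    · intro hq
      have := hD q (xof k)
      by_cases hqs : q ∈ stair (xof k)
      · exact hqs
      · rw [if_neg hqs] at this
        rw [Finset.card_eq_zero, Finset.filter_eq_empty_iff] at this
        exact absurd ⟨hq, rfl⟩ (this (mem_univ k))
    · intro hq
      have hd := hD q (xof k)
      rw [if_pos hq] at hd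
      have hss : (univ.filter fun k' => q ∈ J k' ∧ xof k' = xof k)
          ⊆ (univ.filter fun k' => xof k' = xof k) := by
        intro k' hk'
        simp only [mem_filter, mem_univ, true_and] at hk' ⊢
        exact hk'.2
      have heq := Finset.eq_of_subset_of_card_le hss
        (by rw [hfiber (xof k), hd])
      have hk : k ∈ univ.filter fun k' => xof k' = xof k := by simp
      rw [← heq] at hk
      simp only [mem_filter, mem_univ, true_and] at hk
      exact hk.1
  exact ⟨Equiv.ofBijective xof hbij, fun k => hJeq k⟩

end combin

/-- **Elder-rule staircases are the only candidates for the barcode.**  Let `(X, d_X, f)`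
be an injective augmented metric space, `<` the (unique) compatible total order, and `M`
its zeroth component module.  If `M` is interval decomposable, i.e. `M ≅ ⊕_{k ∈ K} I^{J k}`
for a finite multiset `{{J k : k ∈ K}}` of intervals of `ℝ²`, then this multiset is equal
to the elder-rule staircode `{{I_x : x ∈ X}}`; in particular `|K| = |X|`. -/
theorem barcode_eq_staircode_of_interval_decomposable
    (𝔽 : Type u) [Field 𝔽] (X : Type u) [Fintype X] [MetricSpace X] [LinearOrder X]
    (f : X → ℝ) (hinj : Function.Injective f)
    (hcompat : ∀ x y : X, f x < f y → x < y)
    (K : Type u) [Fintype K] (J : K → Set (ℝ × ℝ))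
    (hJ : ∀ k, IsPosetInterval (J k))
    (hiso : Nonempty (zerothModule 𝔽 f ≅
      sumIntervalModule 𝔽 J (fun k => (hJ k).2.1))) :
    Multiset.map J Finset.univ.val = Multiset.map (staircase f) Finset.univ.val ∧
    Fintype.card K = Fintype.card X := by
  classical
  obtain ⟨e⟩ := hiso
  have hmono : ∀ x y : X, x ≤ y ↔ f x ≤ f y := by
    intro x y
    constructor
    · intro h
      by_contra hc
      push_neg at hc
      exact absurd (hcompat y x hc) (not_lt.mpr h)
    · intro h
      by_contra hc
      push_neg at hc
      rcases lt_or_eq_of_le h with h' | h'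
      · exact absurd (hcompat x y h') (not_lt.mpr hc.le)
      · exact absurd (hinj h') (ne_of_gt hc)
  have hE : ∀ p q : ℝ × ℝ, p ≤ q →
      (Finset.univ.filter fun k => p ∈ J k ∧ q ∈ J k).card =
      (Finset.univ.filter fun x => p ∈ staircase f x ∧ q ∈ staircase f x).card := by
    intro p q hpq
    have h1 := finrank_range_map_eq_of_iso e (homOfLE hpq)
    rw [finrank_range_zeroth 𝔽 f hmono hpq,
      finrank_range_sum J (fun k => (hJ k).2.1) hpq] at h1
    have h2 : (Finset.univ.filter fun k => p ∈ J k ∧ q ∈ J k).card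
        = Fintype.card {k : K // p ∈ J k ∧ q ∈ J k} := by
      rw [Fintype.card_subtype]
    have h3 : (Finset.univ.filter fun x => p ∈ staircase f x ∧ q ∈ staircase f x).card
        = Fintype.card {x : X // p ∈ staircase f x ∧ q ∈ staircase f x} := by
      rw [Fintype.card_subtype]
    rw [h2, h3]
    exact h1.symm
  obtain ⟨eqv, heqv⟩ := combinatorial_step f (staircase f) J hmono
    (fun x p hp => ⟨hp.1, hp.2.1⟩)
    (fun x σ h => staircase_zero f h)
    (staircase_convex f)
    (fun k => (hJ k).1)
    (fun k => (hJ k).2.1)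
    hE
  constructor
  · have hJfun : J = fun k => staircase f (eqv k) := funext heqv
    rw [hJfun]
    have hmm : Multiset.map (fun k => staircase f (eqv k)) Finset.univ.val
        = Multiset.map (staircase f) (Multiset.map eqv Finset.univ.val) := by
      rw [Multiset.map_map]
      rfl
    rw [hmm]
    congr 1
    have huniv := Finset.map_univ_equiv eqv
    calc Multiset.map (⇑eqv) Finset.univ.val
        = Multiset.map (⇑eqv.toEmbedding) Finset.univ.val := by
          rw [Equiv.coe_toEmbedding]
      _ = (Finset.map eqv.toEmbedding Finset.univ).val := (Finset.map_val _ _).symm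
      _ = (Finset.univ : Finset X).val := by rw [huniv]
  · exact Fintype.card_congr eqv
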